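/- Suppose L^T * U has Einstein-SVD whose unfolding is Y Σ Z^T, and define W_r = L * Φ^{-1}(Y_1) * Φ^{-1}(Σ_1)^{-1/2} and V_r = U * Φ^{-1}(Z_1) * Φ^{-1}(Σ_1)^{-1/2}, where Y_1, Z_1 consist of the leading r columns of Y and Z and Σ_1 is the corresponding invertible diagonal block. Then W_r^T * V_r = I_r, and consequently V_r * W_r^T is idempotent (an oblique projector). -/
import Mathlib


open Matrix

/-- Multi-index type: an `N`-tuple of indices with mode sizes `d i`. -/
abbrev Idx {N : ℕ} (d : Fin N → ℕ) : Type := ∀ i, Fin (d i)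

/-- The Einstein product, contracting over the middle multi-index `K`:
`(A *_M B)_{j,i} = ∑_k A_{j,k} B_{k,i}`. -/
def eprod {J K I : Type*} [Fintype K] (A : Matrix J K ℝ) (B : Matrix K I ℝ) :
    Matrix J I ℝ :=
  Matrix.of fun j i => ∑ k, A j k * B k i

/-- The identity (diagonal) tensor. -/
def idT (J : Type*) [DecidableEq J] : Matrix J J ℝ :=
  Matrix.of fun j i => if j = i then 1 else 0
/-- The unfolding isomorphism Φ for 4th-order tensors (square format S1×S2×S1×S2),
realized through the index equivalence Fin S1 × Fin S2 ≃ Fin (S1*S2). -/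
def Phi {S1 S2 : ℕ} (X : Matrix (Fin S1 × Fin S2) (Fin S1 × Fin S2) ℝ) :
    Matrix (Fin (S1 * S2)) (Fin (S1 * S2)) ℝ :=
  Matrix.of fun p q => X (finProdFinEquiv.symm p) (finProdFinEquiv.symm q)

/-- The inverse unfolding Φ⁻¹, turning a matrix into a 4th-order tensor of the
prescribed format. -/
def PhiInv {S1 S2 R1 R2 : ℕ} (X : Matrix (Fin (S1 * S2)) (Fin (R1 * R2)) ℝ) :
    Matrix (Fin S1 × Fin S2) (Fin R1 × Fin R2) ℝ :=
  Matrix.of fun a b => X (finProdFinEquiv a) (finProdFinEquiv b)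


lemma eprod_eq {J K I : Type*} [Fintype K] (A : Matrix J K ℝ) (B : Matrix K I ℝ) :
    eprod A B = A * B := by
  ext j i
  simp [eprod, Matrix.mul_apply]

lemma idT_eq (J : Type*) [DecidableEq J] : idT J = 1 := by
  ext j i
  simp [idT, Matrix.one_apply]

lemma Phi_eq {S1 S2 : ℕ} (X : Matrix (Fin S1 × Fin S2) (Fin S1 × Fin S2) ℝ) :
    Phi X = X.submatrix ⇑finProdFinEquiv.symm ⇑finProdFinEquiv.symm := rfl

lemma PhiInv_eq {S1 S2 R1 R2 : ℕ} (X : Matrix (Fin (S1 * S2)) (Fin (R1 * R2)) ℝ) :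
    PhiInv X = X.submatrix ⇑finProdFinEquiv ⇑finProdFinEquiv := rfl

/-- with the Einstein-SVD Φ(Lᵀ * U) = Y Σ Zᵀ, the truncated tensors
W_r = L * Φ⁻¹(Y₁) * Φ⁻¹(Σ₁)^{-1/2} and V_r = U * Φ⁻¹(Z₁) * Φ⁻¹(Σ₁)^{-1/2}
satisfy W_rᵀ * V_r = I_r, hence V_r * W_rᵀ is idempotent (an oblique projector). -/
theorem balanced_truncation_projector {N1 N2 S1 S2 R1 R2 : ℕ}
    (hr : R1 * R2 ≤ S1 * S2)
    (U L : Matrix (Fin N1 × Fin N2) (Fin S1 × Fin S2) ℝ)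
    (Y Z : Matrix (Fin (S1 * S2)) (Fin (S1 * S2)) ℝ)
    (σ : Fin (S1 * S2) → ℝ)
    -- the SVD of the unfolding: Φ(Lᵀ * U) = Y Σ Zᵀ with Y, Z orthogonal, Σ diagonal :
    (hSVD : Phi (eprod Lᵀ U) = Y * Matrix.diagonal σ * Zᵀ)
    (hY : Yᵀ * Y = 1) (hZ : Zᵀ * Z = 1)
    -- the leading diagonal block Σ₁ is invertible (positive singular values) :
    (hσ : ∀ c : Fin (R1 * R2), 0 < σ (Fin.castLE hr c))
    -- Y₁, Z₁ : leading r columns of Y and Z; Σ₁^{-1/2} : inverse square root of Σ₁ :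
    (Y1 Z1 : Matrix (Fin (S1 * S2)) (Fin (R1 * R2)) ℝ)
    (hY1 : Y1 = Matrix.of fun p c => Y p (Fin.castLE hr c))
    (hZ1 : Z1 = Matrix.of fun p c => Z p (Fin.castLE hr c))
    (Sinvhalf : Matrix (Fin (R1 * R2)) (Fin (R1 * R2)) ℝ)
    (hS : Sinvhalf = Matrix.diagonal fun c => (Real.sqrt (σ (Fin.castLE hr c)))⁻¹)
    -- W_r and V_r :
    (Wr Vr : Matrix (Fin N1 × Fin N2) (Fin R1 × Fin R2) ℝ)
    (hWr : Wr = eprod (eprod L (PhiInv Y1)) (PhiInv Sinvhalf))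
    (hVr : Vr = eprod (eprod U (PhiInv Z1)) (PhiInv Sinvhalf)) :
    eprod Wrᵀ Vr = idT (Fin R1 × Fin R2) ∧
    eprod (eprod Vr Wrᵀ) (eprod Vr Wrᵀ) = eprod Vr Wrᵀ := by
  -- abbreviations
  have hY1s : Y1 = Y.submatrix _root_.id (Fin.castLE hr) := by rw [hY1]; rfl
  have hZ1s : Z1 = Z.submatrix _root_.id (Fin.castLE hr) := by rw [hZ1]; rfl
  have hSt : Sinvhalfᵀ = Sinvhalf := by rw [hS, Matrix.diagonal_transpose]
  -- the unfolded SVD, pulled back through Φ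
  have hM : Lᵀ * U =
      (Y * Matrix.diagonal σ * Zᵀ).submatrix ⇑finProdFinEquiv ⇑finProdFinEquiv := by
    have h := congrArg (fun M => M.submatrix ⇑finProdFinEquiv ⇑finProdFinEquiv) hSVD
    simpa only [Phi_eq, eprod_eq, Matrix.submatrix_submatrix, Equiv.symm_comp_self,
      Matrix.submatrix_id_id] using h
  -- the core identity among the unfolded factors
  have h1 : Y1ᵀ * (Y * Matrix.diagonal σ * Zᵀ * Z1) =
      (Matrix.diagonal σ).submatrix (Fin.castLE hr) (Fin.castLE hr) := by
    rw [hY1s, hZ1s, Matrix.transpose_submatrix]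
    rw [show (Y * Matrix.diagonal σ * Zᵀ) =
        (Y * Matrix.diagonal σ * Zᵀ).submatrix _root_.id _root_.id from
        (Matrix.submatrix_id_id _).symm]
    rw [← Matrix.submatrix_mul (Y * Matrix.diagonal σ * Zᵀ) Z _root_.id _root_.id
        (Fin.castLE hr) Function.bijective_id]
    rw [← Matrix.submatrix_mul Yᵀ (Y * Matrix.diagonal σ * Zᵀ * Z) (Fin.castLE hr)
        _root_.id (Fin.castLE hr) Function.bijective_id]
    have inner : Yᵀ * (Y * Matrix.diagonal σ * Zᵀ * Z) = Matrix.diagonal σ := by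
      have : Yᵀ * (Y * Matrix.diagonal σ * Zᵀ * Z) =
          (Yᵀ * Y) * Matrix.diagonal σ * (Zᵀ * Z) := by
        simp only [Matrix.mul_assoc]
      rw [this, hY, hZ, Matrix.one_mul, Matrix.mul_one]
    rw [inner]
  have h2 : (Matrix.diagonal σ).submatrix (Fin.castLE hr) (Fin.castLE hr) =
      Matrix.diagonal fun c => σ (Fin.castLE hr c) := by
    ext c c'
    simp [Matrix.submatrix_apply, Matrix.diagonal_apply,
      (Fin.castLE_injective hr).eq_iff]
  have key : Sinvhalf * (Y1ᵀ * (Y * Matrix.diagonal σ * Zᵀ * (Z1 * Sinvhalf))) = 1 := by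
    have hre : Sinvhalf * (Y1ᵀ * (Y * Matrix.diagonal σ * Zᵀ * (Z1 * Sinvhalf))) =
        Sinvhalf * (Y1ᵀ * (Y * Matrix.diagonal σ * Zᵀ * Z1) * Sinvhalf) := by
      simp only [Matrix.mul_assoc]
    rw [hre, h1, h2, hS, Matrix.diagonal_mul_diagonal, Matrix.diagonal_mul_diagonal]
    have hne : ∀ c : Fin (R1 * R2), Real.sqrt (σ (Fin.castLE hr c)) ≠ 0 :=
      fun c => ne_of_gt (Real.sqrt_pos.mpr (hσ c))
    ext a b
    rcases eq_or_ne a b with h | h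
    · subst h
      simp only [Matrix.diagonal_apply_eq, Matrix.one_apply_eq]
      rw [← div_eq_mul_inv, Real.div_sqrt, inv_mul_cancel₀ (hne a)]
    · simp [Matrix.diagonal_apply_ne _ h, Matrix.one_apply_ne h]
  -- main computation: Wrᵀ * Vr = 1
  have hmain : Wrᵀ * Vr = 1 := by
    rw [hWr, hVr]
    simp only [eprod_eq, PhiInv_eq]
    calc (L * Y1.submatrix ⇑finProdFinEquiv ⇑finProdFinEquiv *
            Sinvhalf.submatrix ⇑finProdFinEquiv ⇑finProdFinEquiv)ᵀ *
          (U * Z1.submatrix ⇑finProdFinEquiv ⇑finProdFinEquiv *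
            Sinvhalf.submatrix ⇑finProdFinEquiv ⇑finProdFinEquiv)
        = Sinvhalfᵀ.submatrix ⇑finProdFinEquiv ⇑finProdFinEquiv *
          (Y1ᵀ.submatrix ⇑finProdFinEquiv ⇑finProdFinEquiv *
            ((Lᵀ * U) *
              (Z1.submatrix ⇑finProdFinEquiv ⇑finProdFinEquiv *
                Sinvhalf.submatrix ⇑finProdFinEquiv ⇑finProdFinEquiv))) := by
          simp only [Matrix.transpose_mul, Matrix.transpose_submatrix, Matrix.mul_assoc]
      _ = 1 := by
          rw [hM, hSt]
          simp only [Matrix.submatrix_mul_equiv]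
          rw [show Sinvhalf * (Y1ᵀ * (Y * Matrix.diagonal σ * Zᵀ * (Z1 * Sinvhalf))) = 1
            from key]
          exact Matrix.submatrix_one_equiv finProdFinEquiv
  constructor
  · rw [eprod_eq, hmain, idT_eq]
  · simp only [eprod_eq]
    rw [Matrix.mul_assoc, ← Matrix.mul_assoc Wrᵀ Vr, hmain, Matrix.one_mul]
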